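/- arXiv:1211.2948 — 2 statements merged into one kernel-verified Lean document; each statement's English description precedes it below -/
import Mathlib

section
/- Let Δ ⊂ ℂ be the unit disc, E = Δ × ℂ² the trivial rank-2 bundle, and let h be the singular hermitian metric given by the matrix with rows (1+|z|², z) and (z̄, |z|²). Then for every holomorphic section u = (u₁, u₂) of E one has ‖u‖²_h = |z u₁(z)|² + |u₁(z) + z u₂(z)|²; consequently ‖u‖²_h is subharmonic for every holomorphic section u, i.e. h is negatively curved in the sense of Griffiths. -/
/-!
The metric factors as `h = Aᴴ A` with `A(z) = !![z, 0; 1, z]` holomorphic, so `‖u‖²_h = ‖A u‖²`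
is the squared norm of a holomorphic map into `ℂ²`. For a holomorphic `g` with values in a Hilbert
space and `a = g c`, the holomorphic function `⟪a, 2 g - a⟫` has value `‖a‖²` at `c` and real part
`‖g‖² - ‖g - a‖² ≤ ‖g‖²`, so the mean value property gives the sub-mean value inequality for `‖g‖²`.
-/

open MeasureTheory Complex Metric
open scoped ComplexOrder

noncomputable section

/-- The Wirtinger derivative `∂f/∂z` of a function on `ℂ`. -/
def wD1 (f : ℂ → ℂ) (z : ℂ) : ℂ :=
  (1/2) * (fderiv ℝ f z 1 - Complex.I * fderiv ℝ f z Complex.I)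

/-- The Wirtinger derivative `∂f/∂z̄` of a function on `ℂ`. -/
def wDbar1 (f : ℂ → ℂ) (z : ℂ) : ℂ :=
  (1/2) * (fderiv ℝ f z 1 + Complex.I * fderiv ℝ f z Complex.I)

/-- Entrywise Wirtinger derivative `∂h/∂z` of a matrix-valued function on `ℂ`. -/
def mwD1 {r : ℕ} (h : ℂ → Matrix (Fin r) (Fin r) ℂ) (z : ℂ) : Matrix (Fin r) (Fin r) ℂ :=
  Matrix.of fun a b => wD1 (fun w => h w a b) z

/-- Entrywise Wirtinger derivative `∂h/∂z̄` of a matrix-valued function on `ℂ`. -/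
def mwDbar1 {r : ℕ} (h : ℂ → Matrix (Fin r) (Fin r) ℂ) (z : ℂ) : Matrix (Fin r) (Fin r) ℂ :=
  Matrix.of fun a b => wDbar1 (fun w => h w a b) z

/-- The Chern connection matrix `θ = h⁻¹ ∂h` (coefficient of `dz`). -/
def conn1 {r : ℕ} (h : ℂ → Matrix (Fin r) (Fin r) ℂ) (z : ℂ) : Matrix (Fin r) (Fin r) ℂ :=
  (h z)⁻¹ * mwD1 h z

/-- The Chern curvature coefficient: `Θ^h = ∂̄θ^h = (curv1 h) dz ∧ dz̄`. -/
def curv1 {r : ℕ} (h : ℂ → Matrix (Fin r) (Fin r) ℂ) (z : ℂ) : Matrix (Fin r) (Fin r) ℂ :=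
  - mwDbar1 (conn1 h) z

/-- The hermitian pairing `(u,v)_h = v^* h u`. -/
def hpair {r : ℕ} (h : Matrix (Fin r) (Fin r) ℂ) (u v : Fin r → ℂ) : ℂ :=
  dotProduct (star v) (h.mulVec u)

/-- The squared norm `‖u‖²_h`. -/
def hnorm {r : ℕ} (h : Matrix (Fin r) (Fin r) ℂ) (u : Fin r → ℂ) : ℝ :=
  (hpair h u u).re

/-- Subharmonicity on a set `Ω ⊆ ℂ`: upper semicontinuity together with the sub-mean value
inequality over circles whose closed disc lies in the set. -/
def SubhOn (f : ℂ → ℝ) (Ω : Set ℂ) : Prop :=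
  UpperSemicontinuousOn f Ω ∧
  ∀ z ∈ Ω, ∀ ρ : ℝ, 0 < ρ → Metric.closedBall z ρ ⊆ Ω →
    f z ≤ (1 / (2 * Real.pi)) * ∫ t in (0:ℝ)..(2 * Real.pi),
      f (z + (ρ : ℂ) * Complex.exp (t * Complex.I))

end

/-- The singular hermitian metric of Theorem 1.4: rows `(1+|z|², z)` and `(z̄, |z|²)`. -/
noncomputable def hEx (z : ℂ) : Matrix (Fin 2) (Fin 2) ℂ :=
  !![((1 + ‖z‖^2 : ℝ) : ℂ), z; (starRingEnd ℂ) z, ((‖z‖^2 : ℝ) : ℂ)]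

open Real Matrix

theorem sq_norm_le_circleAverage_sq_norm {E : Type*} [NormedAddCommGroup E]
    [InnerProductSpace ℂ E] [CompleteSpace E] {g : ℂ → E} {c : ℂ} {R : ℝ}
    (hg : DiffContOnCl ℂ g (ball c |R|)) :
    ‖g c‖ ^ 2 ≤ circleAverage (fun z => ‖g z‖ ^ 2) c R := by
  set a := g c
  set H : ℂ → ℂ := fun z => inner ℂ a ((2 : ℂ) • g z - a)
  have hH : DiffContOnCl ℂ H (ball c |R|) :=
    (innerSL ℂ a).differentiable.diffContOnCl.comp ((hg.const_smul (2 : ℂ)).sub_const a)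
      (Set.mapsTo_univ _ _)
  have hHc : ContinuousOn H (sphere c |R|) := hH.continuousOn_ball.mono sphere_subset_closedBall
  calc ‖a‖ ^ 2 = (H c).re := by
        simp [H, a, two_smul, inner_self_eq_norm_sq_to_K, ← ofReal_pow]
    _ = circleAverage (fun z => (H z).re) c R := by
      rw [← hH.circleAverage]
      exact (reCLM.circleAverage_comp_comm hHc.circleIntegrable').symm
    _ ≤ circleAverage (fun z => ‖g z‖ ^ 2) c R := by
      refine circleAverage_mono (continuous_re.comp_continuousOn hHc).circleIntegrable'
        ((hg.continuousOn_ball.mono sphere_subset_closedBall).norm.pow 2).circleIntegrable'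
        fun z _ => ?_
      have := norm_sub_sq (𝕜 := ℂ) (g z) a
      rw [inner_re_symm] at this
      simp only [H, RCLike.re_to_complex, inner_sub_right, inner_smul_right,
        inner_self_eq_norm_sq_to_K, coe_algebraMap, ← ofReal_pow, sub_re, mul_re, re_ofNat,
        im_ofNat, zero_mul, sub_zero, ofReal_re] at this ⊢
      nlinarith [sq_nonneg ‖g z - a‖]

theorem subhOn_of_le_circleAverage {f : ℂ → ℝ} {Ω : Set ℂ} (hf : UpperSemicontinuousOn f Ω)
    (hmean : ∀ z ∈ Ω, ∀ ρ : ℝ, 0 < ρ → closedBall z ρ ⊆ Ω → f z ≤ circleAverage f z ρ) :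
    SubhOn f Ω := by
  refine ⟨hf, fun z hz ρ hρ hball => ?_⟩
  simpa [circleAverage_def, circleMap] using hmean z hz ρ hρ hball

theorem subhOn_sq_norm {E : Type*} [NormedAddCommGroup E] [InnerProductSpace ℂ E]
    [CompleteSpace E] {g : ℂ → E} {Ω : Set ℂ} (hg : DifferentiableOn ℂ g Ω) :
    SubhOn (fun z => ‖g z‖ ^ 2) Ω := by
  refine subhOn_of_le_circleAverage (hg.continuousOn.norm.pow 2).upperSemicontinuousOn
    fun z _ ρ hρ hball => sq_norm_le_circleAverage_sq_norm ?_
  rw [abs_of_pos hρ]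
  exact (hg.mono hball).diffContOnCl_ball subset_rfl

theorem hnorm_conjTranspose_mul_self {m r : ℕ} (A : Matrix (Fin m) (Fin r) ℂ) (u : Fin r → ℂ) :
    hnorm (Aᴴ * A) u = ‖(WithLp.toLp 2 (A *ᵥ u) : EuclideanSpace ℂ (Fin m))‖ ^ 2 := by
  rw [@norm_sq_eq_re_inner ℂ, EuclideanSpace.inner_eq_star_dotProduct, hnorm, hpair,
    ← mulVec_mulVec, dotProduct_mulVec, ← star_mulVec, dotProduct_comm]
  rfl

theorem subhOn_hnorm_conjTranspose_mul_self {m r : ℕ} {Ω : Set ℂ}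
    {A : ℂ → Matrix (Fin m) (Fin r) ℂ} (hA : ∀ i j, DifferentiableOn ℂ (fun z => A z i j) Ω)
    {u : ℂ → Fin r → ℂ} (hu : DifferentiableOn ℂ u Ω) :
    SubhOn (fun z => hnorm ((A z)ᴴ * A z) (u z)) Ω := by
  simp only [hnorm_conjTranspose_mul_self]
  have hAu : DifferentiableOn ℂ (fun z => A z *ᵥ u z) Ω :=
    differentiableOn_pi.2 fun i => by
      simp only [mulVec, dotProduct]
      exact DifferentiableOn.fun_sum fun j _ => (hA i j).fun_mul (differentiableOn_pi.1 hu j)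
  exact subhOn_sq_norm
    ((PiLp.continuousLinearEquiv 2 ℂ _).symm.differentiable.comp_differentiableOn hAu)

def hExFactor (z : ℂ) : Matrix (Fin 2) (Fin 2) ℂ :=
  !![z, 0; 1, z]

theorem hEx_eq_conjTranspose_mul_self (z : ℂ) : hEx z = (hExFactor z)ᴴ * hExFactor z := by
  ext i j
  fin_cases i <;> fin_cases j <;>
    simp [hEx, hExFactor, mul_apply, Fin.sum_univ_two, add_comm, mul_comm, ← mul_conj']

theorem hnorm_hEx (z : ℂ) (u : Fin 2 → ℂ) :
    hnorm (hEx z) u = ‖z * u 0‖ ^ 2 + ‖u 0 + z * u 1‖ ^ 2 := by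
  simp [hEx_eq_conjTranspose_mul_self, hnorm_conjTranspose_mul_self, EuclideanSpace.norm_sq_eq,
    hExFactor, dotProduct, Fin.sum_univ_two]

/-- For the metric `hEx` on the trivial rank-2 bundle over the unit disc,
`‖u‖²_h = |z u₁|² + |u₁ + z u₂|²` for every holomorphic section `u = (u₁,u₂)`; consequently
`‖u‖²_h` is subharmonic for every holomorphic section, i.e. `hEx` is negatively curved in
the sense of Griffiths. -/
theorem statement_3 (u : ℂ → Fin 2 → ℂ)
    (hu : DifferentiableOn ℂ u (Metric.ball (0:ℂ) 1)) :
    (∀ z ∈ Metric.ball (0:ℂ) 1,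
      hnorm (hEx z) (u z) = ‖z * u z 0‖^2 + ‖u z 0 + z * u z 1‖^2) ∧
    SubhOn (fun z => hnorm (hEx z) (u z)) (Metric.ball (0:ℂ) 1) := by
  refine ⟨fun z _ => hnorm_hEx z (u z), ?_⟩
  simp only [hEx_eq_conjTranspose_mul_self]
  refine subhOn_hnorm_conjTranspose_mul_self (fun i j => ?_) hu
  fin_cases i <;> fin_cases j <;> simp [hExFactor] <;> fun_prop
end

section
/- Let Δ ⊂ ℂ be the unit disc and let h be the hermitian matrix-valued function on Δ with rows (1+|z|², z) and (z̄, |z|²). Then for z ≠ 0 the connection matrix θ^h := h⁻¹∂h equals the matrix with rows (1/z, 0) and (−1/z², 1/z) times dz; in particular the entry −1/z² is not locally integrable on Δ, so θ^h does not have locally integrable coefficients and Θ^h := ∂̄θ^h is not a current with measure coefficients. -/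
open MeasureTheory Complex Metric
open scoped ComplexOrder

/-! Since `∂|z|² = z̄ dz` and `∂z̄ = 0`, the matrix `∂h` is `!![z̄, 1; 0, z̄]`, and multiplying the
claimed `θ` by `h` reproduces it; `det h = |z|⁴` is nonzero off the origin. In polar coordinates
`|z|⁻²` integrates against `r dr` to `∫ dr / r`, which diverges at `0`. -/

open ComplexConjugate

section Wirtinger

variable {f g : ℂ → ℂ} {z : ℂ}

lemma wD1_const_add (c : ℂ) : wD1 (fun w => c + f w) z = wD1 f z := by
  simp only [wD1, fderiv_const_add]

lemma wD1_mul (hf : DifferentiableAt ℝ f z) (hg : DifferentiableAt ℝ g z) :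
    wD1 (fun w => f w * g w) z = wD1 f z * g z + f z * wD1 g z := by
  simp only [wD1, fderiv_fun_mul hf hg, add_apply, smul_apply, smul_eq_mul]
  ring

lemma wD1_id : wD1 (fun w => w) z = 1 := by
  simp only [wD1, fderiv_fun_id, ContinuousLinearMap.id_apply]
  ring_nf
  rw [I_sq]
  ring

lemma hasFDerivAt_conj : HasFDerivAt (fun w => conj w) (conjCLE : ℂ →L[ℝ] ℂ) z :=
  conjCLE.hasFDerivAt

lemma wD1_conj : wD1 (fun w => conj w) z = 0 := by
  rw [wD1, hasFDerivAt_conj.fderiv]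
  simp

lemma wD1_mul_conj : wD1 (fun w => w * conj w) z = conj z := by
  rw [wD1_mul differentiableAt_fun_id hasFDerivAt_conj.differentiableAt, wD1_id, wD1_conj]
  ring

end Wirtinger

lemma conn1_eq_of_mul_eq {r : ℕ} {h : ℂ → Matrix (Fin r) (Fin r) ℂ} {z : ℂ}
    {A : Matrix (Fin r) (Fin r) ℂ} (hdet : IsUnit (h z).det) (hA : h z * A = mwD1 h z) :
    conn1 h z = A := by
  rw [conn1, ← hA]
  exact Matrix.nonsing_inv_mul_cancel_left _ _ hdet

lemma integrableOn_ball_rpow_neg_norm_iff {E : Type*} [NormedAddCommGroup E] [NormedSpace ℝ E]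
    [Nontrivial E] [FiniteDimensional ℝ E] [MeasurableSpace E] [BorelSpace E]
    (μ : Measure E) [μ.IsAddHaarMeasure] {r α : ℝ} (hr : 0 < r) :
    IntegrableOn (fun x : E => ‖x‖ ^ (-α)) (ball 0 r) μ ↔ α < Module.finrank ℝ E := by
  rw [integrableOn_fun_norm_addHaar μ (f := fun y => y ^ (-α)),
    integrableOn_congr_fun (g := fun y => y ^ ((Module.finrank ℝ E : ℝ) - 1 - α)) _
      measurableSet_Ioo, intervalIntegral.integrableOn_Ioo_rpow_iff hr]
  · constructor <;> intro <;> linarith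
  · intro y hy
    dsimp only
    rw [smul_eq_mul, ← Real.rpow_natCast, ← Real.rpow_add hy.1,
      Nat.cast_pred Module.finrank_pos, sub_eq_add_neg _ α]

lemma hEx_eq (z : ℂ) : hEx z = !![1 + z * conj z, z; conj z, z * conj z] := by
  simp only [hEx, mul_conj', ofReal_add, ofReal_one, ofReal_pow]

lemma mwD1_hEx (z : ℂ) : mwD1 hEx z = !![conj z, 1; 0, conj z] := by
  ext a b
  fin_cases a <;> fin_cases b <;>
    simp [mwD1, hEx_eq, wD1_const_add, wD1_mul_conj, wD1_id, wD1_conj]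

lemma det_hEx (z : ℂ) : (hEx z).det = (z * conj z) ^ 2 := by
  rw [hEx_eq, Matrix.det_fin_two_of]
  ring

lemma conn1_hEx {z : ℂ} (hz : z ≠ 0) : conn1 hEx z = !![1/z, 0; -(1/z^2), 1/z] := by
  have hzc : conj z ≠ 0 := (map_ne_zero _).mpr hz
  refine conn1_eq_of_mul_eq ?_ ?_
  · rw [det_hEx]
    exact (pow_ne_zero _ (mul_ne_zero hz hzc)).isUnit
  · rw [hEx_eq, mwD1_hEx, Matrix.mul_fin_two]
    ext i j
    fin_cases i <;> fin_cases j <;> simp <;> field_simp <;> ring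

lemma conn1_hEx_one_zero_ae_eq :
    (fun z => conn1 hEx z 1 0) =ᵐ[volume] fun z => -(1 / z ^ 2) := by
  filter_upwards [volume.ae_ne 0] with z hz
  simp [conn1_hEx hz]

lemma norm_neg_one_div_sq (z : ℂ) : ‖-(1 / z ^ 2)‖ = ‖z‖ ^ (-2 : ℝ) := by
  rw [norm_neg, one_div, norm_inv, norm_pow, Real.rpow_neg (norm_nonneg z), Real.rpow_two]

lemma not_integrableOn_ball_neg_one_div_sq {ε : ℝ} (hε : 0 < ε) :
    ¬ IntegrableOn (fun z : ℂ => -(1 / z ^ 2)) (ball 0 ε) := by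
  intro h
  have hnorm : IntegrableOn (fun z : ℂ => ‖z‖ ^ (-2 : ℝ)) (ball 0 ε) := by
    simpa only [IntegrableOn, norm_neg_one_div_sq] using h.norm
  rw [integrableOn_ball_rpow_neg_norm_iff volume hε, Complex.finrank_real_complex] at hnorm
  norm_num at hnorm

/-- For the metric `hEx`, away from the origin the connection matrix
`θ^h = h⁻¹∂h` equals `!![1/z, 0; -1/z², 1/z]` (times `dz`); in particular its entry `-1/z²`
is not locally integrable on the unit disc, so `θ^h` does not have locally integrable
coefficients (and hence `Θ^h = ∂̄θ^h` cannot be defined as a current with measure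
coefficients by pairing `θ^h` against derivatives of test functions). -/
theorem statement_4 :
    (∀ z : ℂ, z ≠ 0 → conn1 hEx z = !![1/z, 0; -(1/z^2), 1/z]) ∧
    ¬ LocallyIntegrableOn (fun z => conn1 hEx z 1 0) (Metric.ball (0:ℂ) 1) := by
  refine ⟨fun z hz => conn1_hEx hz, fun hloc => ?_⟩
  have hhalf : IntegrableOn (fun z => conn1 hEx z 1 0) (ball 0 (1 / 2)) :=
    (hloc.integrableOn_compact_subset (closedBall_subset_ball (by norm_num))
      (isCompact_closedBall 0 _)).mono_set ball_subset_closedBall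
  exact not_integrableOn_ball_neg_one_div_sq (by norm_num)
    (hhalf.congr_fun_ae (ae_restrict_of_ae conn1_hEx_one_zero_ae_eq))
end
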